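/- Let W be a condensed wall with special vertices a and b, let L_1 be a ladder contained in W, let R be a rung at an end of L_1 with endvertices v_1 and v_2, let P_1 be a v_1–a path in W and P_2 a v_2–b path in W (paths of length 0 allowed), such that P_1, P_2 and L_1 are pairwise internally disjoint. Then L_1 has at most 6 rungs. -/

import Mathlib

open SimpleGraph

/-- The elementary ladder with `n` rungs: vertices `(i, s)` for `i < n`, `s : Bool`;
the two stringers are the paths `(0,s), (1,s), …, (n-1,s)` and the rungs are the
edges between `(i, false)` and `(i, true)`. -/
def elemLadder (n : ℕ) : SimpleGraph (Fin n × Bool) :=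
  SimpleGraph.fromRel (fun x y =>
    (x.2 = y.2 ∧ (y.1 : ℕ) = (x.1 : ℕ) + 1) ∨ (x.1 = y.1 ∧ x.2 ≠ y.2))

/-- A subdivision copy of the graph `H` inside the graph `G`:  an injective choice of
branch vertices together with, for every edge of `H`, a path of `G` between the
corresponding branch vertices, such that distinct edge-paths meet only in common
branch endvertices and no branch vertex lies in the interior of an edge-path. -/
structure SubdivCopy {U V : Type} (H : SimpleGraph U) (G : SimpleGraph V) where
  branch : U → V
  branch_inj : Function.Injective branch
  walk : ∀ ⦃a b : U⦄, H.Adj a b → G.Walk (branch a) (branch b)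
  walk_isPath : ∀ ⦃a b : U⦄ (h : H.Adj a b), (walk h).IsPath
  walk_symm : ∀ ⦃a b : U⦄ (h : H.Adj a b), walk h.symm = (walk h).reverse
  walk_disj : ∀ ⦃a b a' b' : U⦄ (h : H.Adj a b) (h' : H.Adj a' b'), s(a, b) ≠ s(a', b') →
    ∀ x, x ∈ (walk h).support → x ∈ (walk h').support →
      (x = branch a ∨ x = branch b) ∧ (x = branch a' ∨ x = branch b')
  branch_not_interior : ∀ ⦃a b : U⦄ (h : H.Adj a b) (c : U),
    branch c ∈ (walk h).support → c = a ∨ c = b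

/-- The vertex set of a subdivision copy. -/
def SubdivCopy.verts {U V : Type} {H : SimpleGraph U} {G : SimpleGraph V}
    (S : SubdivCopy H G) : Set V :=
  Set.range S.branch ∪ {x | ∃ (a b : U) (h : H.Adj a b), x ∈ (S.walk h).support}

/-- The edge set of a subdivision copy. -/
def SubdivCopy.edges {U V : Type} {H : SimpleGraph U} {G : SimpleGraph V}
    (S : SubdivCopy H G) : Set (Sym2 V) :=
  {e | ∃ (a b : U) (h : H.Adj a b), e ∈ (S.walk h).edges}

/-- `H` is a minor of `G`: there are nonempty, pairwise disjoint, connected branch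
sets in `G`, one for each vertex of `H`, with an edge of `G` between the branch sets
of any two adjacent vertices of `H`. -/
def IsMinor {U V : Type} (H : SimpleGraph U) (G : SimpleGraph V) : Prop :=
  ∃ f : U → Set V,
    (∀ u, (f u).Nonempty) ∧
    (∀ u, (G.induce (f u)).Connected) ∧
    (∀ u u', u ≠ u' → Disjoint (f u) (f u')) ∧
    (∀ u u', H.Adj u u' → ∃ x ∈ f u, ∃ y ∈ f u', G.Adj x y)

/-- The vertex type of a condensed wall of size `r`: the path vertices `u^j_k`
(`j` indexes the `r` horizontal paths, `k` the `2r` positions, both 0-indexed),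
the bottleneck vertices `z_0, …, z_r`, and the two special vertices `a`, `b`. -/
def CWVert (r : ℕ) : Type := (Fin r × Fin (2 * r)) ⊕ (Fin (r + 1) ⊕ Bool)

/-- The path vertex `u^{j+1}_{k+1}` (so `j`, `k` are 0-indexed). -/
def cwU {r : ℕ} (j : Fin r) (k : Fin (2 * r)) : CWVert r := Sum.inl (j, k)

/-- The bottleneck vertex `z_i`. -/
def cwZ {r : ℕ} (i : Fin (r + 1)) : CWVert r := Sum.inr (Sum.inl i)

/-- The special vertex `a` of the condensed wall. -/
def cwA (r : ℕ) : CWVert r := Sum.inr (Sum.inr false)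

/-- The special vertex `b` of the condensed wall. -/
def cwB (r : ℕ) : CWVert r := Sum.inr (Sum.inr true)

/-- The vertex `c = z_0` of the condensed wall. -/
def cwC (r : ℕ) : CWVert r := cwZ (0 : Fin (r + 1))

/-- The vertex `d = z_r` of the condensed wall. -/
def cwD (r : ℕ) : CWVert r := cwZ (Fin.last r)

/-- The condensed wall of size `r`: for each `j ∈ [r]` a path `u^j_1 … u^j_{2r}`,
with `z_{j-1}` joined to the odd-position vertices and `z_j` to the even-position
vertices of that path, consecutive `z`'s joined by an edge, `a` joined to all
`u^j_1` and `b` joined to all `u^j_{2r}`. -/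
def condensedWall (r : ℕ) : SimpleGraph (CWVert r) :=
  SimpleGraph.fromRel (fun x y =>
    match x, y with
    | Sum.inl (j, k), Sum.inl (j', k') => j = j' ∧ (k' : ℕ) = (k : ℕ) + 1
    | Sum.inr (Sum.inl i), Sum.inr (Sum.inl i') => (i' : ℕ) = (i : ℕ) + 1
    | Sum.inr (Sum.inl i), Sum.inl (j, k) =>
        ((i : ℕ) = (j : ℕ) ∧ (k : ℕ) % 2 = 0) ∨
        ((i : ℕ) = (j : ℕ) + 1 ∧ (k : ℕ) % 2 = 1)
    | Sum.inr (Sum.inr false), Sum.inl (_, k) => (k : ℕ) = 0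
    | Sum.inr (Sum.inr true), Sum.inl (_, k) => (k : ℕ) + 1 = 2 * r
    | _, _ => False)

/-- A vertex of the condensed wall is a bottleneck vertex if it is one of the `z_i`. -/
def IsBottleneck {r : ℕ} (x : CWVert r) : Prop := ∃ i : Fin (r + 1), x = cwZ i

/-- The vertex set of the `j`-th layer of the condensed wall of size `r`
(0-indexed `j`): the vertices `u^j_1, …, u^j_{2r}` together with `z_{j-1}` and `z_j`. -/
def layerVerts (r : ℕ) (j : Fin r) : Set (CWVert r) :=
  {x | (∃ k, x = cwU j k) ∨ x = cwZ j.castSucc ∨ x = cwZ j.succ}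

/-- An X-wing in a graph `G` with designated vertices `a`, `b`, `c`, `d`: a ladder with
three rungs, two disjoint paths joining the endvertices of its first rung to `a` and
to `b`, and two further disjoint paths joining the endvertices of its last rung to `c`
and to `d`, all four paths internally disjoint from each other and from the ladder. -/
structure XWing {V : Type} (G : SimpleGraph V) (a b c d : V) where
  L : SubdivCopy (elemLadder 3) G
  Pa : G.Walk (L.branch (0, false)) a
  Pb : G.Walk (L.branch (0, true)) b
  Pc : G.Walk (L.branch (2, false)) c
  Pd : G.Walk (L.branch (2, true)) d
  Pa_isPath : Pa.IsPath
  Pb_isPath : Pb.IsPath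
  Pc_isPath : Pc.IsPath
  Pd_isPath : Pd.IsPath
  disj_ab : ∀ x, x ∈ Pa.support → x ∉ Pb.support
  disj_ac : ∀ x, x ∈ Pa.support → x ∉ Pc.support
  disj_ad : ∀ x, x ∈ Pa.support → x ∉ Pd.support
  disj_bc : ∀ x, x ∈ Pb.support → x ∉ Pc.support
  disj_bd : ∀ x, x ∈ Pb.support → x ∉ Pd.support
  disj_cd : ∀ x, x ∈ Pc.support → x ∉ Pd.support
  Pa_L : ∀ x ∈ Pa.support, x ∈ L.verts → x = L.branch (0, false)
  Pb_L : ∀ x ∈ Pb.support, x ∈ L.verts → x = L.branch (0, true)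
  Pc_L : ∀ x ∈ Pc.support, x ∈ L.verts → x = L.branch (2, false)
  Pd_L : ∀ x ∈ Pd.support, x ∈ L.verts → x = L.branch (2, true)

/-- The vertex set of an X-wing. -/
def XWing.wverts {V : Type} {G : SimpleGraph V} {a b c d : V} (X : XWing G a b c d) :
    Set V :=
  X.L.verts ∪ {x | x ∈ X.Pa.support} ∪ {x | x ∈ X.Pb.support} ∪
    {x | x ∈ X.Pc.support} ∪ {x | x ∈ X.Pd.support}

/-- The edge set of an X-wing. -/
def XWing.wedges {V : Type} {G : SimpleGraph V} {a b c d : V} (X : XWing G a b c d) :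
    Set (Sym2 V) :=
  X.L.edges ∪ {e | e ∈ X.Pa.edges} ∪ {e | e ∈ X.Pb.edges} ∪
    {e | e ∈ X.Pc.edges} ∪ {e | e ∈ X.Pd.edges}

/-!
Deleting the end rung leaves six consecutive rungs of the ladder that avoid `a` and `b`.
In the condensed wall without `a` and `b` every `z_p` is a cut vertex, so a cycle stays inside
one layer (a row `u^j` together with its two bottleneck vertices), and since the row is a path,
the cycle passes through one of these two bottleneck vertices. The five squares between
consecutive rungs are cycles; neighbouring squares share a rung and hence a layer, so the
pairwise disjoint first, third and fifth squares would need three distinct bottleneck vertices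
of a single layer.
-/

namespace SimpleGraph.Walk

variable {V : Type*} {G : SimpleGraph V} {u v w : V}

lemma IsPath.append_of_forall_mem_support {p : G.Walk u v} {q : G.Walk v w} (hp : p.IsPath)
    (hq : q.IsPath) (h : ∀ x ∈ p.support, x ∈ q.support → x = v) : (p.append q).IsPath := by
  have hq' := hq.support_nodup
  rw [← q.cons_tail_support, List.nodup_cons] at hq'
  rw [isPath_def, support_append, List.nodup_append]
  refine ⟨hp.support_nodup, hq'.2, fun x hx y hy hxy => hq'.1 ?_⟩
  subst hxy
  exact h x hx (List.mem_of_mem_tail hy) ▸ hy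

lemma IsPath.mem_tail_support_iff {p : G.Walk u v} (hp : p.IsPath) :
    w ∈ p.support.tail ↔ w ∈ p.support ∧ w ≠ u := by
  have hp' := hp.support_nodup
  rw [← p.cons_tail_support, List.nodup_cons] at hp'
  conv_rhs => rw [← p.cons_tail_support]
  constructor
  · exact fun hw => ⟨List.mem_cons_of_mem _ hw, fun h => hp'.1 (h ▸ hw)⟩
  · rintro ⟨hw, hwu⟩
    exact (List.mem_cons.mp hw).resolve_left hwu

lemma IsPath.end_notMem_support_takeUntil [DecidableEq V] {p : G.Walk u v} (hp : p.IsPath)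
    (hw : w ∈ p.support) (hwv : w ≠ v) : v ∉ (p.takeUntil w hw).support := fun hv =>
  ((p.take_spec hw).symm ▸ hp).ne_of_mem_support_of_append hwv.symm hv
    (p.dropUntil w hw).end_mem_support rfl

lemma IsCycle.exists_adj_ne_adj {c : G.Walk u u} (hc : c.IsCycle) (hv : v ∈ c.support) :
    ∃ y₁ ∈ c.support, ∃ y₂ ∈ c.support, y₁ ≠ y₂ ∧ G.Adj v y₁ ∧ G.Adj v y₂ := by
  classical
  have hd := hc.rotate hv
  exact ⟨_, (c.mem_support_rotate_iff v hv).mp (getVert_mem_support _ 1), _,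
    (c.mem_support_rotate_iff v hv).mp (getVert_mem_support _ _), hd.snd_ne_penultimate,
    adj_snd hd.not_nil, (adj_penultimate hd.not_nil).symm⟩

lemma IsCycle.exists_walk_avoiding [DecidableEq V] {c : G.Walk u u} (hc : c.IsCycle) {x y z : V}
    (hx : x ∈ c.support) (hy : y ∈ c.support) (hxz : x ≠ z) (hyz : y ≠ z) :
    ∃ p : G.Walk x y, ∀ w ∈ p.support, w ∈ c.support ∧ w ≠ z := by
  by_cases hz : z ∈ c.support
  · set d := c.rotate z hz
    have hd : d.tail.IsPath := (hc.rotate hz).isPath_tail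
    have htail : d.tail.support = d.support.tail := support_tail_of_not_nil _ (hc.rotate hz).not_nil
    have hmem : ∀ {w : V}, w ∈ c.support → w ≠ z → w ∈ d.tail.support := fun {w} hw hwz => by
      have hw' : w ∈ d.support := (c.mem_support_rotate_iff z hz).mpr hw
      rw [← d.cons_tail_support] at hw'
      rw [htail]
      exact (List.mem_cons.mp hw').resolve_left hwz
    have hsub : ∀ {w : V}, w ∈ d.tail.support → w ∈ c.support := fun hw =>
      (c.mem_support_rotate_iff z hz).mp (List.mem_of_mem_tail (htail ▸ hw))
    refine ⟨(d.tail.takeUntil x (hmem hx hxz)).reverse.append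
      (d.tail.takeUntil y (hmem hy hyz)), fun w hw => ?_⟩
    rw [mem_support_append_iff, support_reverse, List.mem_reverse] at hw
    rcases hw with hw | hw
    · exact ⟨hsub (support_takeUntil_subset_support _ _ hw),
        fun h => hd.end_notMem_support_takeUntil _ hxz (h ▸ hw)⟩
    · exact ⟨hsub (support_takeUntil_subset_support _ _ hw),
        fun h => hd.end_notMem_support_takeUntil _ hyz (h ▸ hw)⟩
  · refine ⟨(c.rotate x hx).takeUntil y ((c.mem_support_rotate_iff x hx).mpr hy), fun w hw => ?_⟩
    have := (c.mem_support_rotate_iff x hx).mp (support_takeUntil_subset_support _ _ hw)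
    exact ⟨this, fun h => hz (h ▸ this)⟩

end SimpleGraph.Walk

namespace SubdivCopy

variable {U U' V : Type} {H : SimpleGraph U} {H' : SimpleGraph U'} {G : SimpleGraph V}
  (S : SubdivCopy H G)

lemma notMem_support_walk_of_mem_support_walk {p q p' q' : U} (h : H.Adj p q)
    (h' : H.Adj p' q') (hpp' : p ≠ p') (hpq' : p ≠ q') (hqp' : q ≠ p') (hqq' : q ≠ q') {x : V}
    (hx : x ∈ (S.walk h).support) : x ∉ (S.walk h').support := fun hx' => by
  have hne : s(p, q) ≠ s(p', q') := by simp [hpp', hpq']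
  obtain ⟨h₁, h₂⟩ := S.walk_disj h h' hne x hx hx'
  rcases h₁ with rfl | rfl <;> rcases h₂ with h₂ | h₂ <;>
    simp_all [S.branch_inj.eq_iff]

lemma eq_branch_of_mem_support_walk_of_mem_support_walk {p q r : U} (h : H.Adj p q)
    (h' : H.Adj q r) (hpr : p ≠ r) {x : V} (hx : x ∈ (S.walk h).support)
    (hx' : x ∈ (S.walk h').support) : x = S.branch q := by
  have hne : s(p, q) ≠ s(q, r) := by simp [hpr, h.ne]
  obtain ⟨h₁, h₂⟩ := S.walk_disj h h' hne x hx hx'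
  rcases h₁ with rfl | rfl
  · rcases h₂ with h₂ | h₂ <;> simp_all [S.branch_inj.eq_iff]
  · rfl

lemma branch_ne_branch_of_adj {p q : U} (h : H.Adj p q) : S.branch p ≠ S.branch q :=
  S.branch_inj.ne h.ne

section quadWalk

variable {a b c d : U} (hab : H.Adj a b) (hbc : H.Adj b c) (hcd : H.Adj c d) (hda : H.Adj d a)

def quadWalk : G.Walk (S.branch a) (S.branch a) :=
  ((S.walk hab).append (S.walk hbc)).append ((S.walk hcd).append (S.walk hda))

lemma mem_support_quadWalk_iff {x : V} :
    x ∈ (S.quadWalk hab hbc hcd hda).support ↔ x ∈ (S.walk hab).support ∨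
      x ∈ (S.walk hbc).support ∨ x ∈ (S.walk hcd).support ∨ x ∈ (S.walk hda).support := by
  simp only [quadWalk, Walk.mem_support_append_iff, or_assoc]

lemma quadWalk_isCycle (hac : a ≠ c) (hbd : b ≠ d) : (S.quadWalk hab hbc hcd hda).IsCycle := by
  have hac' : (S.walk hab).append (S.walk hbc) |>.IsPath :=
    (S.walk_isPath hab).append_of_forall_mem_support (S.walk_isPath hbc) fun x hx hx' =>
      S.eq_branch_of_mem_support_walk_of_mem_support_walk hab hbc hac hx hx'
  have hca' : (S.walk hcd).append (S.walk hda) |>.IsPath :=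
    (S.walk_isPath hcd).append_of_forall_mem_support (S.walk_isPath hda) fun x hx hx' =>
      S.eq_branch_of_mem_support_walk_of_mem_support_walk hcd hda hac.symm hx hx'
  refine hac'.isCycle_append hca' (fun x hx hx' => ?_) (Or.inl ?_)
  · rw [hac'.mem_tail_support_iff, Walk.mem_support_append_iff] at hx
    rw [hca'.mem_tail_support_iff, Walk.mem_support_append_iff] at hx'
    obtain ⟨hx | hx, hxa⟩ := hx <;> obtain ⟨hx' | hx', hxc⟩ := hx'
    · exact S.notMem_support_walk_of_mem_support_walk hab hcd hac hda.ne.symm hbc.ne hbd hx hx'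
    · exact hxa (S.eq_branch_of_mem_support_walk_of_mem_support_walk hda hab hbd.symm hx' hx)
    · exact hxc (S.eq_branch_of_mem_support_walk_of_mem_support_walk hbc hcd hbd hx hx')
    · exact S.notMem_support_walk_of_mem_support_walk hbc hda hbd hab.ne.symm hcd.ne hac.symm
        hx hx'
  · have h₁ := Walk.not_nil_iff_lt_length.mp
      (Walk.not_nil_of_ne (p := S.walk hab) (S.branch_ne_branch_of_adj hab))
    have h₂ := Walk.not_nil_iff_lt_length.mp
      (Walk.not_nil_of_ne (p := S.walk hbc) (S.branch_ne_branch_of_adj hbc))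
    rw [Walk.length_append]
    omega

end quadWalk

def comp (f : H' ↪g H) : SubdivCopy H' G where
  branch := S.branch ∘ f
  branch_inj := S.branch_inj.comp f.injective
  walk _ _ h := S.walk (f.map_adj_iff.mpr h)
  walk_isPath _ _ _ := S.walk_isPath _
  walk_symm _ _ _ := S.walk_symm _
  walk_disj _ _ _ _ _ _ hne := S.walk_disj _ _ fun h =>
    hne (Sym2.map.injective f.injective (by simpa using h))
  branch_not_interior _ _ _ c hc :=
    (S.branch_not_interior _ (f c) hc).imp (f.injective ·) (f.injective ·)

lemma verts_comp_subset (f : H' ↪g H) : (S.comp f).verts ⊆ S.verts := by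
  rintro x (⟨u, rfl⟩ | ⟨p, q, h, hx⟩)
  · exact Or.inl ⟨f u, rfl⟩
  · exact Or.inr ⟨f p, f q, _, hx⟩

lemma mem_range_of_branch_mem_verts_comp (f : H' ↪g H) {u : U}
    (hu : S.branch u ∈ (S.comp f).verts) : u ∈ Set.range f := by
  rcases hu with ⟨u', hu'⟩ | ⟨p, q, h, hu⟩
  · exact ⟨u', S.branch_inj hu'⟩
  · rcases S.branch_not_interior _ u hu with rfl | rfl
    exacts [⟨p, rfl⟩, ⟨q, rfl⟩]

end SubdivCopy

section elemLadder

variable {m n : ℕ}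

lemma elemLadder_adj_rung (x : Fin n) : (elemLadder n).Adj (x, false) (x, true) := by
  simp [elemLadder]

lemma elemLadder_adj_of_val_eq_succ {x y : Fin n} (hxy : (y : ℕ) = x + 1) (s : Bool) :
    (elemLadder n).Adj (x, s) (y, s) := by
  simp [elemLadder, Fin.ext_iff, hxy]

def elemLadderShift (c : ℕ) (h : m + c ≤ n) : elemLadder m ↪g elemLadder n where
  toFun x := (⟨x.1 + c, by omega⟩, x.2)
  inj' x y hxy := by
    simp only [Prod.mk.injEq, Fin.mk.injEq, add_left_inj] at hxy
    exact Prod.ext (Fin.ext hxy.1) hxy.2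
  map_rel_iff' {x y} := by
    change (elemLadder n).Adj (⟨x.1 + c, _⟩, x.2) (⟨y.1 + c, _⟩, y.2) ↔ _
    simp only [elemLadder, SimpleGraph.fromRel_adj, ne_eq, Prod.ext_iff, Fin.ext_iff]
    grind

end elemLadder

namespace SubdivCopy

variable {n : ℕ} {V : Type} {G : SimpleGraph V} (S : SubdivCopy (elemLadder n) G)
  {x y : Fin n} (hxy : (y : ℕ) = x + 1)

def ladderSquare : G.Walk (S.branch (x, false)) (S.branch (x, false)) :=
  S.quadWalk (elemLadder_adj_of_val_eq_succ hxy false) (elemLadder_adj_rung y)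
    (elemLadder_adj_of_val_eq_succ hxy true).symm (elemLadder_adj_rung x).symm

lemma ladderSquare_isCycle : (S.ladderSquare hxy).IsCycle :=
  S.quadWalk_isCycle _ _ _ _ (by simp) (by simp)

lemma exists_walk_of_mem_support_ladderSquare {v : V} (hv : v ∈ (S.ladderSquare hxy).support) :
    ∃ (p q : Fin n × Bool) (h : (elemLadder n).Adj p q), v ∈ (S.walk h).support ∧
      (p.1 = x ∨ p.1 = y) ∧ (q.1 = x ∨ q.1 = y) := by
  rw [ladderSquare, mem_support_quadWalk_iff] at hv
  rcases hv with hv | hv | hv | hv <;> exact ⟨_, _, _, hv, by simp, by simp⟩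

lemma branch_mem_support_ladderSquare (s : Bool) :
    S.branch (x, s) ∈ (S.ladderSquare hxy).support ∧
      S.branch (y, s) ∈ (S.ladderSquare hxy).support := by
  simp only [ladderSquare, mem_support_quadWalk_iff]
  cases s
  · exact ⟨Or.inl (Walk.start_mem_support _), Or.inl (Walk.end_mem_support _)⟩
  · exact ⟨Or.inr (Or.inr (Or.inl (Walk.end_mem_support _))),
      Or.inr (Or.inl (Walk.end_mem_support _))⟩

lemma support_ladderSquare_subset_verts {v : V} (hv : v ∈ (S.ladderSquare hxy).support) :
    v ∈ S.verts := by
  obtain ⟨p, q, h, hv, -⟩ := S.exists_walk_of_mem_support_ladderSquare hxy hv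
  exact Or.inr ⟨p, q, h, hv⟩

lemma notMem_support_ladderSquare_of_mem_support_ladderSquare {x' y' : Fin n}
    (hxy' : (y' : ℕ) = x' + 1) (hyx' : (y : ℕ) < x') {v : V}
    (hv : v ∈ (S.ladderSquare hxy).support) : v ∉ (S.ladderSquare hxy').support := fun hv' => by
  obtain ⟨p, q, h, hv, hp, hq⟩ := S.exists_walk_of_mem_support_ladderSquare hxy hv
  obtain ⟨p', q', h', hv', hp', hq'⟩ := S.exists_walk_of_mem_support_ladderSquare hxy' hv'
  have hcol : ∀ {u u' : Fin n × Bool}, (u.1 = x ∨ u.1 = y) → (u'.1 = x' ∨ u'.1 = y') → u ≠ u' := by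
    rintro u u' hu hu' rfl
    rcases hu with hu | hu <;> rcases hu' with hu' | hu' <;>
      rw [hu] at hu' <;> subst hu' <;> omega
  exact S.notMem_support_walk_of_mem_support_walk h h' (hcol hp hp') (hcol hp hq')
    (hcol hq hp') (hcol hq hq') hv hv'

end SubdivCopy

namespace CondensedWall

variable {r : ℕ}

/-- `z_m` sits at height `2 m`, and the row of the vertices `cwU j k` at height `2 j + 1`,
between `z_j` and `z_{j+1}`; the value at `a` and `b` is irrelevant. -/
def cwLevel : CWVert r → ℕ
  | Sum.inl (j, _) => 2 * j + 1
  | Sum.inr (Sum.inl m) => 2 * m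
  | Sum.inr (Sum.inr _) => 0

lemma cwLevel_cwZ (m : Fin (r + 1)) : cwLevel (cwZ m) = 2 * m := rfl

lemma adj_cwU_cwU_iff {j j' : Fin r} {k k' : Fin (2 * r)} :
    (condensedWall r).Adj (cwU j k) (cwU j' k') ↔
      j = j' ∧ ((k' : ℕ) = k + 1 ∨ (k : ℕ) = k' + 1) := by
  rw [condensedWall, fromRel_adj]
  simp only [cwU, CWVert, ne_eq, Sum.inl.injEq, Prod.mk.injEq, Fin.ext_iff]
  omega

/-- Only `z_p` lies at height `2 p`, and no edge avoiding `a` and `b` jumps over it. -/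
lemma cwLevel_lt_iff_of_adj {p : Fin (r + 1)} {x y : CWVert r} (h : (condensedWall r).Adj x y)
    (hxa : x ≠ cwA r) (hxb : x ≠ cwB r) (hxp : x ≠ cwZ p)
    (hya : y ≠ cwA r) (hyb : y ≠ cwB r) (hyp : y ≠ cwZ p) :
    cwLevel x < 2 * p ↔ cwLevel y < 2 * p := by
  rw [condensedWall, fromRel_adj] at h
  rcases x with ⟨j, k⟩ | m | _ | _ <;> rcases y with ⟨j', k'⟩ | m' | _ | _ <;>
    simp_all [cwLevel, cwZ, cwA, cwB, CWVert, Fin.ext_iff] <;> omega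

lemma cwLevel_lt_iff_of_walk {p : Fin (r + 1)} {x y : CWVert r}
    (w : (condensedWall r).Walk x y)
    (hw : ∀ v ∈ w.support, v ≠ cwA r ∧ v ≠ cwB r ∧ v ≠ cwZ p) :
    cwLevel x < 2 * p ↔ cwLevel y < 2 * p := by
  induction w with
  | nil => rfl
  | cons h q ih =>
    simp only [Walk.support_cons, List.mem_cons, forall_eq_or_imp] at hw
    obtain ⟨⟨hxa, hxb, hxp⟩, hq⟩ := hw
    obtain ⟨hya, hyb, hyp⟩ := hq _ q.start_mem_support
    exact (cwLevel_lt_iff_of_adj h hxa hxb hxp hya hyb hyp).trans (ih hq)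

lemma mem_layerVerts_iff {x : CWVert r} {j : Fin r} :
    x ∈ layerVerts r j ↔ (∃ k, x = cwU j k) ∨ x = cwZ j.castSucc ∨ x = cwZ j.succ :=
  Iff.rfl

section vertex

variable {x : CWVert r} (hxa : x ≠ cwA r) (hxb : x ≠ cwB r)
include hxa hxb

lemma cwLevel_le : cwLevel x ≤ 2 * r := by
  rcases x with ⟨j, k⟩ | m | _ | _ <;> simp_all [cwLevel, cwA, cwB]
  omega

lemma eq_cwZ_of_cwLevel_eq {p : Fin (r + 1)} (h : cwLevel x = 2 * p) : x = cwZ p := by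
  rcases x with ⟨j, k⟩ | m | _ | _ <;> simp_all [cwLevel, cwZ, cwA, cwB, CWVert, Fin.ext_iff]
  omega

lemma mem_layerVerts_of_cwLevel {j : Fin r} (h₁ : 2 * (j : ℕ) ≤ cwLevel x)
    (h₂ : cwLevel x ≤ 2 * j + 2) : x ∈ layerVerts r j := by
  rw [mem_layerVerts_iff]
  rcases x with ⟨j', k⟩ | m | _ | _ <;>
    simp_all [cwLevel, cwU, cwZ, cwA, cwB, CWVert, Fin.ext_iff] <;> omega

end vertex

lemma eq_of_mem_layerVerts {x y : CWVert r} {j j' : Fin r} (hxy : x ≠ y)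
    (hx : x ∈ layerVerts r j) (hx' : x ∈ layerVerts r j') (hy : y ∈ layerVerts r j)
    (hy' : y ∈ layerVerts r j') : j = j' := by
  rw [mem_layerVerts_iff] at hx hx' hy hy'
  rcases x with ⟨i, k⟩ | m | _ | _ <;> rcases y with ⟨i', k'⟩ | m' | _ | _ <;>
    simp_all [cwU, cwZ, CWVert, Fin.ext_iff]
  omega

lemma eq_cwZ_of_isBottleneck_of_mem_layerVerts {x : CWVert r} {j : Fin r} (hx : IsBottleneck x)
    (hxj : x ∈ layerVerts r j) : x = cwZ j.castSucc ∨ x = cwZ j.succ := by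
  obtain ⟨m, rfl⟩ := hx
  rw [mem_layerVerts_iff] at hxj
  simpa [cwU, cwZ, CWVert] using hxj

section cycle

variable {x : CWVert r} {D : (condensedWall r).Walk x x} (hD : D.IsCycle)
  (hab : ∀ v ∈ D.support, v ≠ cwA r ∧ v ≠ cwB r)
include hD hab

/-- The rows are paths, so a cycle cannot live on the rows alone: at a vertex of largest
position its two neighbours on the cycle would both be its predecessor. -/
lemma exists_cwZ_mem_support_of_isCycle : ∃ p, cwZ p ∈ D.support := by
  classical
  by_contra! hz
  have hu : ∀ v ∈ D.support, ∃ j k, v = cwU j k := by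
    intro v hv
    rcases v with ⟨j, k⟩ | m | _ | _
    exacts [⟨j, k, rfl⟩, (hz m hv).elim, ((hab _ hv).1 rfl).elim, ((hab _ hv).2 rfl).elim]
  let pos : CWVert r → ℕ := Sum.elim (fun u => (u.2 : ℕ)) fun _ => 0
  obtain ⟨v, hv, hmax⟩ := D.support.toFinset.exists_max_image pos ⟨x, by simp⟩
  rw [List.mem_toFinset] at hv
  obtain ⟨j, k, rfl⟩ := hu v hv
  obtain ⟨y₁, hy₁, y₂, hy₂, hne, h₁, h₂⟩ := hD.exists_adj_ne_adj hv
  obtain ⟨j₁, k₁, rfl⟩ := hu y₁ hy₁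
  obtain ⟨j₂, k₂, rfl⟩ := hu y₂ hy₂
  have hk₁ : pos (cwU j₁ k₁) ≤ pos (cwU j k) := hmax _ (List.mem_toFinset.mpr hy₁)
  have hk₂ : pos (cwU j₂ k₂) ≤ pos (cwU j k) := hmax _ (List.mem_toFinset.mpr hy₂)
  rw [adj_cwU_cwU_iff] at h₁ h₂
  obtain ⟨rfl, h₁⟩ := h₁
  obtain ⟨rfl, h₂⟩ := h₂
  simp only [pos, cwU, Sum.elim_inl] at hk₁ hk₂
  exact hne (congrArg _ (Fin.ext (by omega)))

lemma not_forall_cwLevel_eq_of_isCycle (p : Fin (r + 1)) :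
    ¬ ∀ v ∈ D.support, cwLevel v = 2 * p := fun h => by
  obtain ⟨y, hy, -, -, -, hxy, -⟩ := hD.exists_adj_ne_adj D.start_mem_support
  have hx := D.start_mem_support
  refine hxy.ne ?_
  rw [eq_cwZ_of_cwLevel_eq (hab x hx).1 (hab x hx).2 (h x hx),
    eq_cwZ_of_cwLevel_eq (hab y hy).1 (hab y hy).2 (h y hy)]

/-- A cycle cannot pass from one side of the cut vertex `z_p` to the other, because removing
`z_p` leaves the rest of the cycle connected. -/
lemma cwLevel_le_or_le_of_isCycle (p : ℕ) (hp : p ≤ r) :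
    (∀ v ∈ D.support, cwLevel v ≤ 2 * p) ∨ (∀ v ∈ D.support, 2 * p ≤ cwLevel v) := by
  classical
  by_contra! ⟨⟨y, hy, hyp⟩, ⟨z, hz, hzp⟩⟩
  let q : Fin (r + 1) := ⟨p, Nat.lt_succ_of_le hp⟩
  have hne : ∀ {v}, cwLevel v ≠ 2 * p → v ≠ cwZ q := fun h he => h (he ▸ cwLevel_cwZ q)
  obtain ⟨w, hw⟩ := hD.exists_walk_avoiding hy hz (hne hyp.ne') (hne hzp.ne)
  have := cwLevel_lt_iff_of_walk w fun v hv => ⟨(hab v (hw v hv).1).1, (hab v (hw v hv).1).2,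
    (hw v hv).2⟩
  change cwLevel y < 2 * p ↔ cwLevel z < 2 * p at this
  omega

lemma exists_layerVerts_of_isCycle :
    ∃ j, (∀ v ∈ D.support, v ∈ layerVerts r j) ∧ ∃ v ∈ D.support, IsBottleneck v := by
  obtain ⟨p, hp⟩ := exists_cwZ_mem_support_of_isCycle hD hab
  have hlayer : ∀ j (hj : j < r),
      (∀ v ∈ D.support, 2 * j ≤ cwLevel v ∧ cwLevel v ≤ 2 * j + 2) →
      ∃ j, (∀ v ∈ D.support, v ∈ layerVerts r j) ∧ ∃ v ∈ D.support, IsBottleneck v :=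
    fun j hj h => ⟨⟨j, hj⟩, fun v hv => mem_layerVerts_of_cwLevel (hab v hv).1 (hab v hv).2
      (h v hv).1 (h v hv).2, _, hp, p, rfl⟩
  have hpz := cwLevel_cwZ p
  have hp_lt := p.isLt
  rcases cwLevel_le_or_le_of_isCycle hD hab p (by omega) with hle | hge
  · have hp0 : (p : ℕ) ≠ 0 := fun h0 => not_forall_cwLevel_eq_of_isCycle hD hab p fun v hv => by
      have := hle v hv
      omega
    rcases cwLevel_le_or_le_of_isCycle hD hab (p - 1) (by omega) with hle' | hge'
    · have := hle' _ hp
      omega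
    · exact hlayer (p - 1) (by omega) fun v hv => ⟨hge' v hv, by have := hle v hv; omega⟩
  · have hpr : (p : ℕ) ≠ r := fun hr => not_forall_cwLevel_eq_of_isCycle hD hab p fun v hv => by
      have := hge v hv
      have := cwLevel_le (hab v hv).1 (hab v hv).2
      omega
    rcases cwLevel_le_or_le_of_isCycle hD hab (p + 1) (by omega) with hle' | hge'
    · exact hlayer p (by omega) fun v hv => ⟨hge v hv, hle' v hv⟩
    · have := hge' _ hp
      omega

end cycle

end CondensedWall

open CondensedWall in
theorem SubdivCopy.cwA_mem_verts_or_cwB_mem_verts {r : ℕ}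
    (L : SubdivCopy (elemLadder 6) (condensedWall r)) : cwA r ∈ L.verts ∨ cwB r ∈ L.verts := by
  by_contra! ⟨ha, hb⟩
  have hsquare : ∀ (x y : Fin 6) (hxy : (y : ℕ) = x + 1), ∃ j,
      (∀ v ∈ (L.ladderSquare hxy).support, v ∈ layerVerts r j) ∧
        ∃ v ∈ (L.ladderSquare hxy).support, IsBottleneck v := fun x y hxy =>
    exists_layerVerts_of_isCycle (L.ladderSquare_isCycle hxy) fun v hv =>
      have hv := L.support_ladderSquare_subset_verts hxy hv
      ⟨fun h => ha (h ▸ hv), fun h => hb (h ▸ hv)⟩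
  have hsame : ∀ {x y z : Fin 6} (hxy : (y : ℕ) = x + 1) (hyz : (z : ℕ) = y + 1) {j j' : Fin r},
      (∀ v ∈ (L.ladderSquare hxy).support, v ∈ layerVerts r j) →
      (∀ v ∈ (L.ladderSquare hyz).support, v ∈ layerVerts r j') → j = j' :=
    fun hxy hyz _ _ h h' => eq_of_mem_layerVerts (L.branch_ne_branch_of_adj (elemLadder_adj_rung _))
      (h _ (L.branch_mem_support_ladderSquare hxy false).2)
      (h' _ (L.branch_mem_support_ladderSquare hyz false).1)
      (h _ (L.branch_mem_support_ladderSquare hxy true).2)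
      (h' _ (L.branch_mem_support_ladderSquare hyz true).1)
  obtain ⟨j, h₀, v₀, hv₀, hz₀⟩ := hsquare 0 1 rfl
  obtain ⟨j₁, h₁, -⟩ := hsquare 1 2 rfl
  obtain ⟨j₂, h₂, v₂, hv₂, hz₂⟩ := hsquare 2 3 rfl
  obtain ⟨j₃, h₃, -⟩ := hsquare 3 4 rfl
  obtain ⟨j₄, h₄, v₄, hv₄, hz₄⟩ := hsquare 4 5 rfl
  obtain rfl := hsame _ _ h₀ h₁
  obtain rfl := hsame _ _ h₁ h₂
  obtain rfl := hsame _ _ h₂ h₃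
  obtain rfl := hsame _ _ h₃ h₄
  have hpigeon : v₀ = v₂ ∨ v₀ = v₄ ∨ v₂ = v₄ := by
    rcases eq_cwZ_of_isBottleneck_of_mem_layerVerts hz₀ (h₀ _ hv₀) with rfl | rfl <;>
      rcases eq_cwZ_of_isBottleneck_of_mem_layerVerts hz₂ (h₂ _ hv₂) with rfl | rfl <;>
      rcases eq_cwZ_of_isBottleneck_of_mem_layerVerts hz₄ (h₄ _ hv₄) with rfl | rfl <;>
      simp
  rcases hpigeon with rfl | rfl | rfl
  · exact L.notMem_support_ladderSquare_of_mem_support_ladderSquare _ _ (by decide) hv₀ hv₂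
  · exact L.notMem_support_ladderSquare_of_mem_support_ladderSquare _ _ (by decide) hv₀ hv₄
  · exact L.notMem_support_ladderSquare_of_mem_support_ladderSquare _ _ (by decide) hv₂ hv₄

theorem ladder_with_ab_paths_le_six_general (r n : ℕ)
    (S : SubdivCopy (elemLadder n) (condensedWall r)) (i : Fin n) (s : Bool)
    (hi : (i : ℕ) = 0 ∨ (i : ℕ) + 1 = n)
    (P₁ : (condensedWall r).Walk (S.branch (i, s)) (cwA r))
    (P₂ : (condensedWall r).Walk (S.branch (i, !s)) (cwB r))
    (hP₁L : ∀ x, x ∈ P₁.support → x ∈ S.verts → x = S.branch (i, s))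
    (hP₂L : ∀ x, x ∈ P₂.support → x ∈ S.verts → x = S.branch (i, !s)) :
    n ≤ 6 := by
  by_contra! hn
  obtain ⟨c, hc, hci⟩ : ∃ c, 6 + c ≤ n ∧ ∀ x : Fin 6, (x : ℕ) + c ≠ i := by
    rcases hi with hi | hi
    · exact ⟨1, by omega, fun x => by omega⟩
    · exact ⟨0, by omega, fun x => by omega⟩
  let L := S.comp (elemLadderShift c hc)
  have hend : ∀ {t : Bool}, S.branch (i, t) ∉ L.verts := fun h => by
    obtain ⟨x, hx⟩ := S.mem_range_of_branch_mem_verts_comp _ h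
    exact hci x.1 (congrArg (fun u => (u.1 : ℕ)) hx)
  rcases L.cwA_mem_verts_or_cwB_mem_verts with h | h
  · exact hend (hP₁L _ P₁.end_mem_support (S.verts_comp_subset _ h) ▸ h)
  · exact hend (hP₂L _ P₂.end_mem_support (S.verts_comp_subset _ h) ▸ h)

/-- A ladder in a condensed wall whose two stringers are continued at one end-rung by
internally disjoint paths to `a` and to `b` has at most 6 rungs. -/
theorem ladder_with_ab_paths_le_six (r n : ℕ)
    (S : SubdivCopy (elemLadder n) (condensedWall r)) (i : Fin n) (s : Bool)
    (hi : (i : ℕ) = 0 ∨ (i : ℕ) + 1 = n)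
    (P₁ : (condensedWall r).Walk (S.branch (i, s)) (cwA r))
    (P₂ : (condensedWall r).Walk (S.branch (i, !s)) (cwB r))
    (hP₁ : P₁.IsPath) (hP₂ : P₂.IsPath)
    (hP₁L : ∀ x, x ∈ P₁.support → x ∈ S.verts → x = S.branch (i, s))
    (hP₂L : ∀ x, x ∈ P₂.support → x ∈ S.verts → x = S.branch (i, !s))
    (hP₁₂ : ∀ x, x ∈ P₁.support → x ∉ P₂.support) :
    n ≤ 6 :=
  ladder_with_ab_paths_le_six_general r n S i s hi P₁ P₂ hP₁L hP₂L
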